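/- Let U be a non-singular orthogonal geometry over a field F of characteristic ≠ 2 and U_para = F·1 ⊕ U the paravectors in C(U), with quadratic form q_para(x) = x·x̄ and bilinear form S_para(x,y) = (x·ȳ + y·x̄)/2. For any non-isotropic paravector x (q_para(x) ≠ 0) and any paravector y, one has x · y · (x')⁻¹ = −r_x(ȳ) in C(U), where r_x(z) = z − (2·S_para(z,x)/q_para(x))·x. -/
import Mathlib

open CliffordAlgebra

private lemma aux_expand {F A : Type*} [CommRing F] [Ring A] [Algebra F A] (a b : A) (c₁ c₂ s t : F)
    (haa : a * a = (-s) • (1:A))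
    (hba : b * a = (-(2*t)) • (1:A) - a * b) :
    (c₁ • (1:A) + a) * (c₂ • (1:A) + b) * (c₁ • (1:A) + a)
      = (c₁^2*c₂ - c₂*s - 2*t*c₁) • (1:A)
        + (2*c₁*c₂ - 2*t) • a + (c₁^2 + s) • b := by
  simp only [add_mul, mul_add, smul_mul_assoc, mul_smul_comm, mul_one, one_mul, smul_smul,
    mul_assoc]
  rw [hba, haa]
  simp only [mul_sub, mul_smul_comm, mul_one, smul_sub, smul_smul, ← mul_assoc, haa,
    smul_mul_assoc, one_mul]
  module

theorem stmt_18 {F : Type*} [Field F] (hchar : (2 : F) ≠ 0)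
    {U : Type*} [AddCommGroup U] [Module F U] [FiniteDimensional F U]
    (S : LinearMap.BilinForm F U) (hS : ∀ x y, S x y = S y x)
    (hnd : ∀ x : U, (∀ y : U, S x y = 0) → x = 0)
    (Q : QuadraticForm F U) (hQ : ∀ u, Q u = -(S u u))
    (c₁ c₂ : F) (u₁ u₂ : U)
    (hx : c₁ ^ 2 + S u₁ u₁ ≠ 0) :
    (algebraMap F (CliffordAlgebra Q) c₁ + ι Q u₁) *
      (algebraMap F (CliffordAlgebra Q) c₂ + ι Q u₂) *
      Ring.inverse (involute (algebraMap F (CliffordAlgebra Q) c₁ + ι Q u₁)) =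
    -(algebraMap F (CliffordAlgebra Q)
        (c₂ - (2 * (c₂ * c₁ - S u₂ u₁) / (c₁ ^ 2 + S u₁ u₁)) * c₁) +
      ι Q (-u₂ - (2 * (c₂ * c₁ - S u₂ u₁) / (c₁ ^ 2 + S u₁ u₁)) • u₁)) := by
  set m := algebraMap F (CliffordAlgebra Q) with hm
  set a := ι Q u₁ with hA
  set b := ι Q u₂ with hB
  set s := S u₁ u₁ with hs
  set t := S u₂ u₁ with ht
  set d := c₁ ^ 2 + s with hd
  set k := 2 * (c₂ * c₁ - t) / d with hk
  have hm1 : ∀ r : F, m r = r • (1 : CliffordAlgebra Q) := fun r =>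
    Algebra.algebraMap_eq_smul_one r
  have haa : a * a = (-s) • (1 : CliffordAlgebra Q) := by
    rw [hA, ι_sq_scalar, hQ, hm1]
  have hba : b * a = (-(2*t)) • (1 : CliffordAlgebra Q) - a * b := by
    have h := ι_mul_ι_add_swap (Q := Q) u₂ u₁
    have hpol : QuadraticMap.polar Q u₂ u₁ = -(2*t) := by
      simp only [QuadraticMap.polar, hQ, map_add, LinearMap.add_apply]
      rw [hS u₁ u₂]
      ring
    rw [hpol, hm1] at h
    linear_combination (norm := noncomm_ring) h
  -- the inverse of involute x
  have hinv : involute (m c₁ + a) = m c₁ - a := by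
    rw [map_add, involute_ι, AlgHom.commutes, sub_eq_add_neg, hm]
  have hxinv : (m c₁ - a) * (d⁻¹ • (m c₁ + a)) = 1 := by
    rw [mul_smul_comm]
    have : (m c₁ - a) * (m c₁ + a) = m d := by
      rw [hm1 c₁, hm1 d, hd]
      simp only [sub_mul, mul_add, smul_mul_assoc, mul_smul_comm, mul_one, one_mul, smul_smul,
        haa]
      module
    rw [this, hm1, smul_smul, inv_mul_cancel₀ hx, one_smul]
  have hxinv' : (d⁻¹ • (m c₁ + a)) * (m c₁ - a) = 1 := by
    rw [smul_mul_assoc]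
    have : (m c₁ + a) * (m c₁ - a) = m d := by
      rw [hm1 c₁, hm1 d, hd]
      simp only [sub_mul, mul_sub, mul_add, add_mul, smul_mul_assoc, mul_smul_comm, mul_one,
        one_mul, smul_smul, haa]
      module
    rw [this, hm1, smul_smul, inv_mul_cancel₀ hx, one_smul]
  have hru : Ring.inverse (involute (m c₁ + a)) = d⁻¹ • (m c₁ + a) := by
    rw [hinv]
    exact Ring.inverse_unit ⟨m c₁ - a, d⁻¹ • (m c₁ + a), hxinv, hxinv'⟩
  rw [hru, mul_smul_comm]
  have key := aux_expand a b c₁ c₂ s t haa hba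
  rw [← hm1 c₁, ← hm1 c₂] at key
  rw [key, smul_add, smul_add, smul_smul, smul_smul, smul_smul]
  have hd0 : (c₁^2 + s) ≠ 0 := by rw [← hd]; exact hx
  have h1 : d⁻¹ * (c₁^2*c₂ - c₂*s - 2*t*c₁) = -(c₂ - k*c₁) := by
    rw [hk, hd]; field_simp; ring
  have h2 : d⁻¹ * (2*c₁*c₂ - 2*t) = k := by
    rw [hk, hd]; field_simp
  have h3 : d⁻¹ * d = 1 := by rw [hd]; exact inv_mul_cancel₀ hd0
  rw [h1, h2, h3, one_smul]
  rw [show ι Q (-u₂ - k • u₁) = -b - k • a by rw [map_sub, map_neg, map_smul]]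
  rw [hm1 (c₂ - k * c₁)]
  module
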